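/- arXiv:2605.30730 — 8 statements merged into one kernel-verified Lean document; each statement's English description precedes it below -/
import Mathlib

section
/- Let R ≤ M_n(ℂ) be a subspace with R† = R. If R is vertex-transitive, then either R is a quantum graph (i.e., every element of R is traceless) or the identity matrix 1_n belongs to R. -/
namespace QG

open Matrix

abbrev Mat (n : ℕ) := Matrix (Fin n) (Fin n) ℂ

/-- Conjugation `a ↦ u * a * uᴴ` as a linear map. -/
noncomputable def conjMap {n : ℕ} (u : Mat n) : Mat n →ₗ[ℂ] Mat n :=
  (LinearMap.mulLeft ℂ u).comp (LinearMap.mulRight ℂ uᴴ)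

/-- The stabilizer of `R`: unitaries `u` with `u R uᴴ = R`. -/
def Stab {n : ℕ} (R : Submodule ℂ (Mat n)) : Set (Mat n) :=
  {u | u ∈ Matrix.unitaryGroup (Fin n) ℂ ∧ R.map (conjMap u) = R}

/-- `R` is vertex-transitive if the ℂ-linear span of `Stab R` is all of `M_n(ℂ)`. -/
def IsVertexTransitive {n : ℕ} (R : Submodule ℂ (Mat n)) : Prop :=
  Submodule.span ℂ (Stab R) = ⊤

/-! Let `p` be the orthogonal projection of `1` onto `R` for the trace inner product. Conjugation
by a unitary `u ∈ Stab R` is an isometry that preserves `R` and fixes `1`, so it fixes `p`: `p`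
commutes with `Stab R`, hence with its span `M_n(ℂ)`, and `p = c • 1`. If some `a ∈ R` has
`tr a ≠ 0`, then `conj (tr a) = ⟪a, 1⟫ = ⟪a, p⟫ = c * conj (tr a)` forces `c = 1`, so
`1 = p ∈ R`. -/

open scoped InnerProductSpace

theorem _root_.LinearIsometryEquiv.apply_starProjection_eq_of_map_eq {𝕜 E : Type*} [RCLike 𝕜]
    [NormedAddCommGroup E] [InnerProductSpace 𝕜 E] (f : E ≃ₗᵢ[𝕜] E) {K : Submodule 𝕜 E}
    [K.HasOrthogonalProjection] (hK : K.map (f.toLinearEquiv : E →ₗ[𝕜] E) = K) {x : E}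
    (hx : f x = x) : f (K.starProjection x) = K.starProjection x := by
  have h := K.starProjection_map_apply f x
  simp only [hK] at h
  rw [f.symm_apply_eq.2 hx.symm] at h
  exact h.symm

theorem _root_.Submodule.mem_of_starProjection_eq_smul {𝕜 E : Type*} [RCLike 𝕜]
    [NormedAddCommGroup E] [InnerProductSpace 𝕜 E] {K : Submodule 𝕜 E}
    [K.HasOrthogonalProjection] {x w : E} {c : 𝕜} (hc : K.starProjection x = c • x)
    (hw : w ∈ K) (hwx : ⟪w, x⟫_𝕜 ≠ 0) : x ∈ K := by
  have hc1 : c = 1 := by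
    have h : ⟪w, x⟫_𝕜 = c * ⟪w, x⟫_𝕜 := by
      rw [← inner_smul_right, ← hc, ← K.inner_starProjection_left_eq_right,
        K.starProjection_eq_self_iff.2 hw]
    exact (mul_eq_right₀ hwx).1 h.symm
  rw [← K.starProjection_eq_self_iff, hc, hc1, one_smul]

variable {n : ℕ}

section Frobenius

open scoped ComplexOrder

noncomputable local instance : NormedAddCommGroup (Mat n) :=
  Matrix.toMatrixNormedAddCommGroup 1 PosDef.one

noncomputable local instance : InnerProductSpace ℂ (Mat n) :=
  Matrix.toMatrixInnerProductSpace 1 PosDef.one.posSemidef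

lemma inner_eq_trace (a b : Mat n) : ⟪a, b⟫_ℂ = (b * aᴴ).trace := by
  simp [inner]

lemma inner_one_right (a : Mat n) : ⟪a, 1⟫_ℂ = star a.trace := by
  rw [inner_eq_trace, one_mul, trace_conjTranspose]

noncomputable def conjIsometry (u : unitary (Mat n)) : Mat n ≃ₗᵢ[ℂ] Mat n :=
  (Unitary.conjStarAlgAut ℂ (Mat n) u).toAlgEquiv.toLinearEquiv.isometryOfInner fun a b => by
    set U : Mat n := (u : Mat n)
    have hU : star U * U = 1 := Unitary.coe_star_mul_self u
    simp only [inner_eq_trace, ← star_eq_conjTranspose]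
    calc (U * b * star U * star (U * a * star U)).trace
        = (U * b * (star U * U) * star a * star U).trace := by
          simp only [star_mul, star_star, mul_assoc]
      _ = (star U * (U * b * star a)).trace := by rw [hU, mul_one, trace_mul_comm]
      _ = (b * star a).trace := by rw [← mul_assoc, ← mul_assoc, hU, one_mul]

lemma conjIsometry_apply (u : unitary (Mat n)) (a : Mat n) :
    conjIsometry u a = u * a * star (u : Mat n) :=
  rfl

lemma toLinearMap_conjIsometry (u : unitary (Mat n)) :
    ((conjIsometry u).toLinearEquiv : Mat n →ₗ[ℂ] Mat n) = conjMap u := by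
  ext a : 1
  simp [conjIsometry_apply, conjMap, mul_assoc, star_eq_conjTranspose]

lemma commute_starProjection_one_of_mem_stab {R : Submodule ℂ (Mat n)} {u : Mat n}
    (hu : u ∈ Stab R) : Commute u (R.starProjection 1) := by
  have h := (conjIsometry ⟨u, hu.1⟩).apply_starProjection_eq_of_map_eq
    (by rw [toLinearMap_conjIsometry]; exact hu.2) (x := 1)
    (by rw [conjIsometry_apply, mul_one]; exact Unitary.mul_star_self_of_mem hu.1)
  exact (commute_unitary_iff_star_right_conjugate hu.1).2 h

lemma starProjection_one_mem_center {R : Submodule ℂ (Mat n)} (hvt : IsVertexTransitive R) :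
    R.starProjection 1 ∈ Subalgebra.center ℂ (Mat n) := by
  have hspan : Submodule.span ℂ (Stab R) ≤
      Subalgebra.toSubmodule (Subalgebra.centralizer ℂ {R.starProjection 1}) :=
    Submodule.span_le.2 fun u hu => (Subalgebra.mem_centralizer_iff ℂ).2 fun p hp => by
      rw [Set.mem_singleton_iff.1 hp]
      exact (commute_starProjection_one_of_mem_stab hu).eq.symm
  rw [hvt] at hspan
  exact Subalgebra.mem_center_iff.2 fun b =>
    ((Subalgebra.mem_centralizer_iff ℂ).1 (hspan trivial) _ rfl).symm

lemma one_mem_of_trace_ne_zero {R : Submodule ℂ (Mat n)} (hvt : IsVertexTransitive R) {a : Mat n}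
    (ha : a ∈ R) (htr : a.trace ≠ 0) : (1 : Mat n) ∈ R := by
  obtain ⟨c, hc⟩ := Algebra.mem_bot.1 <|
    Algebra.IsCentral.center_eq_bot ℂ (Mat n) ▸ starProjection_one_mem_center hvt
  refine Submodule.mem_of_starProjection_eq_smul (c := c) ?_ ha ?_
  · rw [← hc, Algebra.algebraMap_eq_smul_one]
  · rwa [inner_one_right, star_ne_zero]

end Frobenius

theorem stmt0_general {n : ℕ} (R : Submodule ℂ (Mat n))
    (hvt : IsVertexTransitive R) :
    (∀ a ∈ R, a.trace = 0) ∨ (1 : Mat n) ∈ R := by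
  refine or_iff_not_imp_left.2 fun h => ?_
  push Not at h
  obtain ⟨a, ha, htr⟩ := h
  exact one_mem_of_trace_ne_zero hvt ha htr

/-- if `Rᴴ = R` is vertex-transitive, then either `R` is a quantum graph
(all elements traceless) or `1ₙ ∈ R`. -/
theorem stmt0 {n : ℕ} (R : Submodule ℂ (Mat n)) (hstar : ∀ a ∈ R, aᴴ ∈ R)
    (hvt : IsVertexTransitive R) :
    (∀ a ∈ R, a.trace = 0) ∨ (1 : Mat n) ∈ R :=
  stmt0_general R hvt

end QG
end

section
/- Every vertex-transitive quantum graph R ≤ M_n(ℂ) is regular. -/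
namespace QG

open Matrix

/-- `R` is a quantum graph: closed under conjugate transpose and every element is traceless. -/
def IsQuantumGraph {n : ℕ} (R : Submodule ℂ (Mat n)) : Prop :=
  ∀ a ∈ R, aᴴ ∈ R ∧ a.trace = 0

/-- `a : Fin d → Mat n` is an orthonormal basis of `R` with respect to the normalized
trace inner product `⟨a, b⟩ = tr(aᴴ b) / n`. -/
def IsONBasis {n d : ℕ} (R : Submodule ℂ (Mat n)) (a : Fin d → Mat n) : Prop :=
  (∀ i, a i ∈ R) ∧ Submodule.span ℂ (Set.range a) = R ∧
    ∀ i j, ((a i)ᴴ * a j).trace / (n : ℂ) = if i = j then 1 else 0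

/-- `R` is regular: its degree matrix `∑ aᵢ aᵢᴴ` (for an orthonormal basis, independent of
the choice) is a scalar multiple of the identity. -/
def IsRegular {n : ℕ} (R : Submodule ℂ (Mat n)) : Prop :=
  ∃ (d : ℕ) (a : Fin d → Mat n), IsONBasis R a ∧
    ∃ c : ℂ, (∑ i, a i * (a i)ᴴ) = c • (1 : Mat n)

/-!
Two orthonormal bases of `R` differ by a unitary coefficient matrix, so the degree matrix
`D = ∑ aᵢ aᵢᴴ` does not depend on the basis. A unitary `u` with `u R uᴴ = R` maps an orthonormal
basis of `R` to another one, hence `u D uᴴ = D`, i.e. `u` commutes with `D`. Vertex-transitivity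
says that such unitaries span `M_n(ℂ)`, so `D` is central and therefore scalar.
-/

section DegreeMatrix

variable {m ι : Type*} [Fintype m] [Fintype ι]

def degreeMatrix (a : ι → Matrix m m ℂ) : Matrix m m ℂ := ∑ i, a i * (a i)ᴴ

lemma degreeMatrix_eq_of_eq_sum_smul [DecidableEq ι] {a b : ι → Matrix m m ℂ}
    {C : Matrix ι ι ℂ} (hC : Cᴴ * C = 1) (hb : ∀ j, b j = ∑ i, C j i • a i) :
    degreeMatrix b = degreeMatrix a := by
  have hδ : ∀ i k, ∑ j, C j i * star (C j k) = if k = i then 1 else 0 := fun i k ↦ by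
    rw [← one_apply, ← hC, mul_apply]
    exact Finset.sum_congr rfl fun j _ ↦ mul_comm _ _
  calc degreeMatrix b
      = ∑ j, ∑ i, ∑ k, (C j i * star (C j k)) • (a i * (a k)ᴴ) := by
        refine Finset.sum_congr rfl fun j _ ↦ ?_
        simp only [hb, conjTranspose_sum, conjTranspose_smul, Finset.sum_mul, Finset.mul_sum,
          smul_mul, Matrix.mul_smul, smul_smul, mul_comm (star _)]
        exact Finset.sum_comm
    _ = ∑ i, ∑ k, (∑ j, C j i * star (C j k)) • (a i * (a k)ᴴ) := by
        simp only [Finset.sum_smul]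
        rw [Finset.sum_comm]
        exact Finset.sum_congr rfl fun i _ ↦ Finset.sum_comm
    _ = degreeMatrix a := by
        simp only [hδ, ite_smul, one_smul, zero_smul, Finset.sum_ite_eq', Finset.mem_univ,
          if_true, degreeMatrix]

lemma degreeMatrix_map (φ : Matrix m m ℂ ≃⋆ₐ[ℂ] Matrix m m ℂ) (a : ι → Matrix m m ℂ) :
    degreeMatrix (fun i ↦ φ (a i)) = φ (degreeMatrix a) := by
  simp [degreeMatrix, ← star_eq_conjTranspose, map_sum, map_mul, map_star]

end DegreeMatrix

lemma conjMap_eq_conjStarAlgAut {n : ℕ} (u : unitary (Mat n)) :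
    conjMap (u : Mat n) = (Unitary.conjStarAlgAut ℂ (Mat n) u).toAlgEquiv.toLinearMap := by
  ext1 x
  exact (mul_assoc _ _ _).symm

lemma trace_conjStarAlgAut {n : ℕ} (u : unitary (Mat n)) (x : Mat n) :
    (Unitary.conjStarAlgAut ℂ (Mat n) u x).trace = x.trace := by
  rw [Unitary.conjStarAlgAut_apply, trace_mul_cycle, Unitary.coe_star_mul_self, one_mul]

namespace IsONBasis

variable {n d : ℕ} {R : Submodule ℂ (Mat n)} {a b : Fin d → Mat n}

lemma trace_sum_smul (ha : IsONBasis R a) (s t : Fin d → ℂ) :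
    ((∑ i, s i • a i)ᴴ * ∑ j, t j • a j).trace / n = ∑ i, star (s i) * t i := by
  have hexp : ((∑ i, s i • a i)ᴴ * ∑ j, t j • a j).trace
      = ∑ i, ∑ j, (star (s i) * t j) * ((a i)ᴴ * a j).trace := by
    simp only [conjTranspose_sum, conjTranspose_smul, Finset.sum_mul, Finset.mul_sum, smul_mul,
      Matrix.mul_smul, trace_sum, trace_smul, smul_smul, smul_eq_mul, mul_comm (t _)]
    exact Finset.sum_comm
  simp_rw [hexp, Finset.sum_div, mul_div_assoc, ha.2.2, mul_ite, mul_one, mul_zero,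
    Finset.sum_ite_eq, Finset.mem_univ, if_true]

lemma degreeMatrix_eq (ha : IsONBasis R a) (hb : IsONBasis R b) :
    degreeMatrix b = degreeMatrix a := by
  have hcoef : ∀ j, ∃ c : Fin d → ℂ, ∑ i, c i • a i = b j := fun j ↦
    (Submodule.mem_span_range_iff_exists_fun ℂ).mp (ha.2.1 ▸ hb.1 j)
  choose C hC using hcoef
  have hCC : of C * (of C)ᴴ = 1 := by
    ext l j
    have h := ha.trace_sum_smul (C j) (C l)
    rw [hC, hC, hb.2.2] at h
    simp only [mul_apply, one_apply, conjTranspose_apply, of_apply, h, mul_comm (C l _),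
      eq_comm (a := l)]
  exact degreeMatrix_eq_of_eq_sum_smul (mul_eq_one_comm.mp hCC) fun j ↦ (hC j).symm

lemma map (ha : IsONBasis R a) (φ : Mat n ≃⋆ₐ[ℂ] Mat n) (hφ : ∀ x, (φ x).trace = x.trace)
    (hR : R.map φ.toAlgEquiv.toLinearMap = R) : IsONBasis R (fun i ↦ φ (a i)) := by
  refine ⟨fun i ↦ hR ▸ Submodule.mem_map_of_mem (ha.1 i), ?_, fun i j ↦ ?_⟩
  · have hspan := congrArg (Submodule.map φ.toAlgEquiv.toLinearMap) ha.2.1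
    rw [Submodule.map_span, hR, ← Set.range_comp] at hspan
    exact hspan
  · rw [← star_eq_conjTranspose, ← map_star, ← map_mul, hφ, star_eq_conjTranspose, ha.2.2]

lemma commute_degreeMatrix (ha : IsONBasis R a) {u : Mat n} (hu : u ∈ Stab R) :
    Commute u (degreeMatrix a) := by
  obtain ⟨hu, hR⟩ := hu
  have hfix : u * degreeMatrix a * star u = degreeMatrix a := by
    rw [conjMap_eq_conjStarAlgAut ⟨u, hu⟩] at hR
    have hdeg := (ha.map _ (trace_conjStarAlgAut ⟨u, hu⟩) hR).degreeMatrix_eq ha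
    rw [degreeMatrix_map, Unitary.conjStarAlgAut_apply] at hdeg
    exact hdeg.symm
  calc u * degreeMatrix a = u * degreeMatrix a * (star u * u) := by
        rw [Unitary.star_mul_self_of_mem hu, mul_one]
    _ = degreeMatrix a * u := by rw [← mul_assoc, hfix]

end IsONBasis

lemma mem_center_of_commute_of_span_eq_top {K A : Type*} [CommSemiring K] [Semiring A]
    [Algebra K A] {S : Set A} (hS : Submodule.span K S = ⊤) {z : A}
    (hz : ∀ u ∈ S, Commute u z) : z ∈ Set.center A := by
  have hle : Submodule.span K S ≤ Subalgebra.toSubmodule (Subalgebra.centralizer K {z}) :=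
    Submodule.span_le.mpr fun u hu ↦ Subalgebra.mem_centralizer_iff K |>.mpr
      fun _ hg ↦ (Set.mem_singleton_iff.mp hg ▸ hz u hu).symm
  rw [hS] at hle
  exact Semigroup.mem_center_iff.mpr fun g ↦
    (Subalgebra.mem_centralizer_iff K).mp (hle Submodule.mem_top) z rfl |>.symm

open scoped ComplexOrder in
lemma posDef_diagonal_inv_natCast (n : ℕ) : (diagonal fun _ : Fin n ↦ (n : ℂ)⁻¹).PosDef :=
  .diagonal fun i ↦ RCLike.inv_pos.mpr (mod_cast i.pos)

open scoped ComplexOrder in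
lemma exists_isONBasis {n : ℕ} (R : Submodule ℂ (Mat n)) :
    ∃ (d : ℕ) (a : Fin d → Mat n), IsONBasis R a := by
  -- Mathlib's inner product `⟪x, y⟫ = tr (y M xᴴ)` with `M = n⁻¹ • 1` is the normalised trace form.
  let _ := toMatrixNormedAddCommGroup _ (posDef_diagonal_inv_natCast n)
  let _ := toMatrixInnerProductSpace _ (posDef_diagonal_inv_natCast n).posSemidef
  have hinner : ∀ x y : Mat n, inner ℂ x y = (xᴴ * y).trace / n := fun x y ↦ by
    change (y * _ * xᴴ).trace = _
    rw [← smul_one_eq_diagonal, mul_smul_one, smul_mul, trace_smul, trace_mul_comm, smul_eq_mul,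
      inv_mul_eq_div]
  let b := stdOrthonormalBasis ℂ R
  refine ⟨_, fun i ↦ b i, fun i ↦ (b i).2, ?_, fun i j ↦ ?_⟩
  · have hspan := congrArg (Submodule.map R.subtype) b.toBasis.span_eq
    rw [Submodule.map_span, Submodule.map_subtype_top, ← Set.range_comp] at hspan
    exact hspan
  · rw [← hinner, ← Submodule.coe_inner, orthonormal_iff_ite.mp b.orthonormal]

theorem stmt1_general {n : ℕ} (R : Submodule ℂ (Mat n))
    (hvt : IsVertexTransitive R) : IsRegular R := by
  obtain ⟨d, a, ha⟩ := exists_isONBasis R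
  have hcenter : degreeMatrix a ∈ Set.center (Mat n) :=
    mem_center_of_commute_of_span_eq_top hvt fun _ hu ↦ ha.commute_degreeMatrix hu
  rw [center_eq_range] at hcenter
  obtain ⟨c, hc⟩ := hcenter
  exact ⟨d, a, ha, c, by rw [← degreeMatrix, ← hc, scalar_apply, smul_one_eq_diagonal]⟩

/-- every vertex-transitive quantum graph is regular. -/
theorem stmt1 {n : ℕ} (R : Submodule ℂ (Mat n)) (hQG : IsQuantumGraph R)
    (hvt : IsVertexTransitive R) : IsRegular R :=
  stmt1_general R hvt

end QG
end

section
/- Let R, S ≤ M_n(ℂ) be isomorphic quantum graphs of dimension d. Then for any Hermitian orthonormal basis (a_1,…,a_d) of R and any Hermitian orthonormal basis (b_1,…,b_d) of S, the panoramic polynomials p_R(t_1,…,t_d) = det(t_1 a_1 + ⋯ + t_d a_d) and p_S(t_1,…,t_d) = det(t_1 b_1 + ⋯ + t_d b_d) are orthogonally equivalent. -/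
/-! Conjugation by the unitary `u` carries `a` to a Hermitian orthonormal family `u aᵢ uᴴ` in `S`
and does not change determinants. Its coefficients `⟨b_j, u aᵢ uᴴ⟩` in the basis `b` are real,
because both matrices are Hermitian, and orthonormality of the two families makes the real
coefficient matrix `r` orthogonal; then `u (∑ tᵢ aᵢ) uᴴ = ∑ (r t)_j b_j`. -/

namespace QG

open Matrix

/-- Quantum graphs `R`, `S` are isomorphic if `u R uᴴ = S` for some unitary `u`. -/
def Iso {n : ℕ} (R S : Submodule ℂ (Mat n)) : Prop :=
  ∃ u ∈ Matrix.unitaryGroup (Fin n) ℂ, R.map (conjMap u) = S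

section

variable {n d : ℕ} {ι : Type*} [Fintype ι]

lemma conjMap_apply (u x : Mat n) : conjMap u x = u * x * uᴴ :=
  (Matrix.mul_assoc u x uᴴ).symm

noncomputable def trInner (x y : Mat n) : ℂ := (xᴴ * y).trace / n

lemma star_trInner (x y : Mat n) : star (trInner x y) = trInner y x := by
  simp only [trInner, star_div₀, star_natCast, ← trace_conjTranspose, conjTranspose_mul,
    conjTranspose_conjTranspose]

lemma star_trInner_of_isHermitian {x y : Mat n} (hx : x.IsHermitian) (hy : y.IsHermitian) :
    star (trInner x y) = trInner x y := by
  rw [star_trInner, trInner, trInner, hx.eq, hy.eq, trace_mul_comm]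

lemma trInner_conj_unitary {u : Mat n} (hu : u ∈ unitaryGroup (Fin n) ℂ) (x y : Mat n) :
    trInner (u * x * uᴴ) (u * y * uᴴ) = trInner x y := by
  have huu : uᴴ * u = 1 := Unitary.star_mul_self_of_mem hu
  have hprod : (u * x * uᴴ)ᴴ * (u * y * uᴴ) = u * (xᴴ * y) * uᴴ := by
    simp only [conjTranspose_mul, conjTranspose_conjTranspose, Matrix.mul_assoc]
    rw [← Matrix.mul_assoc uᴴ u, huu, Matrix.one_mul]
  rw [trInner, trInner, hprod, trace_mul_cycle, ← Matrix.mul_assoc, huu, Matrix.one_mul]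

lemma det_conj_unitary {u : Mat n} (hu : u ∈ unitaryGroup (Fin n) ℂ) (x : Mat n) :
    (u * x * uᴴ).det = x.det := by
  have huu : uᴴ * u = 1 := Unitary.star_mul_self_of_mem hu
  rw [det_mul_comm, ← Matrix.mul_assoc, huu, Matrix.one_mul]

def TrOrthonormal [DecidableEq ι] (b : ι → Mat n) : Prop :=
  ∀ i j, trInner (b i) (b j) = if i = j then 1 else 0

lemma trInner_sum_smul_right (y : Mat n) (c : ι → ℂ) (b : ι → Mat n) :
    trInner y (∑ j, c j • b j) = ∑ j, c j * trInner y (b j) := by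
  simp only [trInner, Matrix.mul_sum, Matrix.mul_smul, trace_sum, trace_smul, smul_eq_mul,
    Finset.sum_div, mul_div_assoc]

lemma trInner_sum_smul_left (y : Mat n) (c : ι → ℂ) (b : ι → Mat n) :
    trInner (∑ j, c j • b j) y = ∑ j, star (c j) * trInner (b j) y := by
  rw [← star_trInner, trInner_sum_smul_right, star_sum]
  simp only [star_mul', star_trInner, mul_comm]

lemma TrOrthonormal.trInner_sum_smul [DecidableEq ι] {b : ι → Mat n} (hb : TrOrthonormal b)
    (c c' : ι → ℂ) :
    trInner (∑ j, c j • b j) (∑ j, c' j • b j) = ∑ j, star (c j) * c' j := by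
  simp only [trInner_sum_smul_left, trInner_sum_smul_right, hb _ _, mul_ite, mul_one, mul_zero,
    Finset.sum_ite_eq', Finset.mem_univ, if_true, mul_comm (c' _)]

lemma IsONBasis.eq_sum {S : Submodule ℂ (Mat n)} {b : Fin d → Mat n}
    (hb : IsONBasis S b) {x : Mat n} (hx : x ∈ S) :
    x = ∑ j, trInner (b j) x • b j := by
  rw [← hb.2.1, Submodule.mem_span_range_iff_exists_fun] at hx
  obtain ⟨c, rfl⟩ := hx
  have hbo : TrOrthonormal b := hb.2.2
  simp only [trInner_sum_smul_right, hbo _ _, mul_ite, mul_one, mul_zero, Finset.sum_ite_eq,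
    Finset.mem_univ, if_true]

noncomputable def coeffMatrix (b a : Fin d → Mat n) : Matrix (Fin d) (Fin d) ℝ :=
  of fun j i => (trInner (b j) (a i)).re

lemma ofReal_coeffMatrix {b a : Fin d → Mat n} (hbH : ∀ j, (b j).IsHermitian)
    (haH : ∀ i, (a i).IsHermitian) (j i : Fin d) :
    (coeffMatrix b a j i : ℂ) = trInner (b j) (a i) :=
  Complex.conj_eq_iff_re.mp (star_trInner_of_isHermitian (hbH j) (haH i))

section

variable {S : Submodule ℂ (Mat n)} {b a : Fin d → Mat n} (hb : IsONBasis S b)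
  (hbH : ∀ j, (b j).IsHermitian) (haS : ∀ i, a i ∈ S) (haH : ∀ i, (a i).IsHermitian)
include hb hbH haS haH

lemma sum_smul_eq_sum_coeffMatrix_mulVec_smul (t : Fin d → ℝ) :
    ∑ i, (t i : ℂ) • a i = ∑ j, ((coeffMatrix b a *ᵥ t) j : ℂ) • b j := by
  calc ∑ i, (t i : ℂ) • a i = ∑ i, (t i : ℂ) • ∑ j, trInner (b j) (a i) • b j := by
        simp only [← hb.eq_sum (haS _)]
    _ = ∑ j, (∑ i, trInner (b j) (a i) * t i) • b j := by
        simp only [Finset.smul_sum, smul_smul, Finset.sum_smul, mul_comm (t _ : ℂ)]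
        exact Finset.sum_comm
    _ = ∑ j, ((coeffMatrix b a *ᵥ t) j : ℂ) • b j := by
        simp only [mulVec, dotProduct, Complex.ofReal_sum, Complex.ofReal_mul,
          ofReal_coeffMatrix hbH haH]

lemma coeffMatrix_mem_orthogonalGroup (ha : TrOrthonormal a) :
    coeffMatrix b a ∈ orthogonalGroup (Fin d) ℝ := by
  rw [mem_orthogonalGroup_iff']
  ext i k
  have hbo : TrOrthonormal b := hb.2.2
  have h := ha i k
  rw [hb.eq_sum (haS i), hb.eq_sum (haS k), hbo.trInner_sum_smul] at h
  apply Complex.ofReal_injective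
  simp only [mul_apply, transpose_apply, one_apply, Complex.ofReal_sum, Complex.ofReal_mul,
    ofReal_coeffMatrix hbH haH, apply_ite Complex.ofReal, Complex.ofReal_one, Complex.ofReal_zero]
  rw [← h]
  refine Finset.sum_congr rfl fun j _ => ?_
  rw [star_trInner_of_isHermitian (hbH j) (haH i)]

end

end

theorem stmt4_general {n d : ℕ} (R S : Submodule ℂ (Mat n))
    (hiso : Iso R S) (a b : Fin d → Mat n)
    (ha : IsONBasis R a) (haH : ∀ i, (a i).IsHermitian)
    (hb : IsONBasis S b) (hbH : ∀ i, (b i).IsHermitian) :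
    ∃ r ∈ Matrix.orthogonalGroup (Fin d) ℝ,
      ∀ t : Fin d → ℝ,
        (∑ i, (t i : ℂ) • a i).det = (∑ i, ((r.mulVec t) i : ℂ) • b i).det := by
  obtain ⟨u, hu, hRS⟩ := hiso
  set a' : Fin d → Mat n := fun i => u * a i * uᴴ
  have ha'S : ∀ i, a' i ∈ S := fun i => hRS ▸ ⟨a i, ha.1 i, conjMap_apply u (a i)⟩
  have ha'H : ∀ i, (a' i).IsHermitian := fun i => isHermitian_mul_mul_conjTranspose u (haH i)
  have ha'o : TrOrthonormal a' := fun i j => (trInner_conj_unitary hu _ _).trans (ha.2.2 i j)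
  refine ⟨coeffMatrix b a', coeffMatrix_mem_orthogonalGroup hb hbH ha'S ha'H ha'o, fun t => ?_⟩
  rw [← sum_smul_eq_sum_coeffMatrix_mulVec_smul hb hbH ha'S ha'H, ← det_conj_unitary hu]
  simp only [a', Finset.mul_sum, Finset.sum_mul, Matrix.mul_smul, Matrix.smul_mul]

/-- isomorphic quantum graphs of dimension `d` have orthogonally equivalent
panoramic polynomials `p_R(t) = det(t₁ a₁ + ⋯ + t_d a_d)`, for any choices of Hermitian
orthonormal bases. -/
theorem stmt4 {n d : ℕ} (R S : Submodule ℂ (Mat n))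
    (hR : IsQuantumGraph R) (hS : IsQuantumGraph S)
    (hdR : Module.finrank ℂ ↥R = d) (hdS : Module.finrank ℂ ↥S = d)
    (hiso : Iso R S) (a b : Fin d → Mat n)
    (ha : IsONBasis R a) (haH : ∀ i, (a i).IsHermitian)
    (hb : IsONBasis S b) (hbH : ∀ i, (b i).IsHermitian) :
    ∃ r ∈ Matrix.orthogonalGroup (Fin d) ℝ,
      ∀ t : Fin d → ℝ,
        (∑ i, (t i : ℂ) • a i).det = (∑ i, ((r.mulVec t) i : ℂ) • b i).det :=
  stmt4_general R S hiso a b ha haH hb hbH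

end QG
end

section
/- Let R ≤ M_n(ℂ) be a regular quantum graph, and assume that n is odd. Then dim(R) ≠ 1. -/
/-
If `R = ℂ·A` is one-dimensional, regularity forces `A Aᴴ = 1`, and `Aᴴ ∈ R` gives
`Aᴴ = l A`, so `l A² = 1`. Rescaling `A` by a square root of `l` yields a traceless
involution `B`. Then `(1 + B)/2` is an idempotent, whose trace `n/2` is the dimension
of its range, so `n` is even.
-/

namespace QG

open Matrix

theorem _root_.Matrix.even_card_of_mul_self_eq_one_of_trace_eq_zero {K m : Type*} [Field K]
    [CharZero K] [Fintype m] [DecidableEq m] {B : Matrix m m K} (hB : B * B = 1)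
    (htr : B.trace = 0) : Even (Fintype.card m) := by
  set e : Matrix m m K := (2⁻¹ : K) • (1 + B)
  have he : IsIdempotentElem e := by
    show e * e = e
    simp only [e, smul_mul_smul_comm, add_mul, mul_add, hB, one_mul, mul_one]
    module
  have hproj := LinearMap.IsIdempotentElem.isProj_range _ (he.map toLinAlgEquiv')
  have key : (Fintype.card m : K) = 2 * Module.finrank K (LinearMap.range (toLinAlgEquiv' e)) := by
    rw [← hproj.trace,
      show LinearMap.trace K _ (toLinAlgEquiv' e) = e.trace from e.trace_toLin'_eq]
    simp [e, htr]
  exact ⟨_, by exact_mod_cast key.trans (two_mul _)⟩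

theorem _root_.Matrix.even_card_of_smul_mul_self_eq_one_of_trace_eq_zero {K m : Type*} [Field K]
    [IsAlgClosed K] [CharZero K] [Fintype m] [DecidableEq m] {A : Matrix m m K} {l : K}
    (hA : l • (A * A) = 1) (htr : A.trace = 0) : Even (Fintype.card m) := by
  obtain ⟨s, rfl⟩ := IsAlgClosed.exists_eq_mul_self l
  refine Matrix.even_card_of_mul_self_eq_one_of_trace_eq_zero (B := s • A) ?_ (by simp [htr])
  rwa [smul_mul_smul_comm]

theorem IsONBasis.linearIndependent {n d : ℕ} {R : Submodule ℂ (Mat n)} {a : Fin d → Mat n}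
    (ha : IsONBasis R a) : LinearIndependent ℂ a := by
  rw [Fintype.linearIndependent_iff]
  intro g hg j
  have : ((a j)ᴴ * ∑ i, g i • a i).trace / n = g j := by
    simp only [Matrix.mul_sum, Matrix.mul_smul, Matrix.trace_sum, Matrix.trace_smul, smul_eq_mul,
      Finset.sum_div, mul_div_assoc, ha.2.2, mul_ite, mul_one, mul_zero, Finset.sum_ite_eq,
      Finset.mem_univ, if_true]
  simpa [hg] using this.symm

theorem IsRegular.exists_span_singleton_of_finrank_eq_one {n : ℕ} {R : Submodule ℂ (Mat n)}
    (hR : IsRegular R) (h1 : Module.finrank ℂ R = 1) :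
    ∃ A : Mat n, R = Submodule.span ℂ {A} ∧ A * Aᴴ = 1 := by
  obtain ⟨d, a, ha, c, hsum⟩ := hR
  obtain rfl : d = 1 := by
    have := finrank_span_eq_card ha.linearIndependent
    rwa [ha.2.1, h1, Fintype.card_fin, eq_comm] at this
  refine ⟨a 0, by rw [← ha.2.1, Set.range_unique]; rfl, ?_⟩
  have hnorm : ((a 0)ᴴ * a 0).trace / n = 1 := by simpa using ha.2.2 0 0
  have hn : (n : ℂ) ≠ 0 := fun h => by simp [h] at hnorm
  have hc : c = 1 := by
    have := congrArg Matrix.trace hsum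
    rw [Fin.sum_univ_one, trace_mul_comm, (div_eq_one_iff_eq hn).mp hnorm] at this
    simpa [hn] using this
  simpa [hc] using hsum

/-- a regular quantum graph in `M_n(ℂ)` with `n` odd cannot be 1-dimensional. -/
theorem stmt6 {n : ℕ} (R : Submodule ℂ (Mat n)) (hQG : IsQuantumGraph R)
    (hreg : IsRegular R) (hodd : Odd n) : Module.finrank ℂ ↥R ≠ 1 := by
  intro h1
  obtain ⟨A, rfl, hAA⟩ := hreg.exists_span_singleton_of_finrank_eq_one h1
  obtain ⟨hAH, htr⟩ := hQG A (Submodule.mem_span_singleton_self A)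
  obtain ⟨l, hl⟩ := Submodule.mem_span_singleton.mp hAH
  refine Nat.not_even_iff_odd.mpr hodd ?_
  simpa using even_card_of_smul_mul_self_eq_one_of_trace_eq_zero
    (by rwa [← mul_smul_comm, hl]) htr

end QG
end

section
/- Let R ≤ M_n(ℂ) be a subspace with R† = R, and assume that n is odd. If dim(R) ≥ 2, then R contains a nonzero Hermitian matrix a with det(a) = 0. -/
/-!
The Hermitian elements of `R` form a real subspace `H` with `dim_ℝ H ≥ dim_ℂ R ≥ 2`, since every
`a ∈ R` splits as `ℜ a + i ℑ a` with `ℜ a, ℑ a ∈ H`. On `H` the function `a ↦ det a` is real-valued,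
continuous and, as `n` is odd, odd. Since `H \ {0}` is connected, it contains `a` and `-a`, where
the determinant takes opposite signs, so it vanishes somewhere on `H \ {0}`.
-/

namespace QG

open Matrix

open ComplexStarModule

theorem exists_ne_zero_eq_zero_of_odd {E : Type*} [AddCommGroup E] [Module ℝ E]
    [TopologicalSpace E] [ContinuousAdd E] [ContinuousSMul ℝ E] (hE : 1 < Module.rank ℝ E)
    {f : E → ℝ} (hf : Continuous f) (hodd : Function.Odd f) : ∃ x ≠ 0, f x = 0 := by
  have : Nontrivial E := rank_pos_iff_nontrivial.mp (zero_lt_one.trans hE)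
  obtain ⟨a, ha, hfa⟩ : ∃ a : E, a ≠ 0 ∧ f a ≤ 0 := by
    obtain ⟨a, ha⟩ := exists_ne (0 : E)
    rcases le_total (f a) 0 with h | h
    · exact ⟨a, ha, h⟩
    · exact ⟨-a, neg_ne_zero.mpr ha, by linarith [hodd a]⟩
  have hconn := (isConnected_compl_singleton_of_one_lt_rank hE 0).isPreconnected
  have hzero : (0 : ℝ) ∈ Set.Icc (f a) (f (-a)) := ⟨hfa, by linarith [hodd a]⟩
  obtain ⟨x, hx, hfx⟩ := hconn.intermediate_value ha (neg_ne_zero.mpr ha) hf.continuousOn hzero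
  exact ⟨x, hx, hfx⟩

theorem im_det_eq_zero_of_isHermitian {m : Type*} [Fintype m] [DecidableEq m]
    {a : Matrix m m ℂ} (ha : a.IsHermitian) : a.det.im = 0 :=
  Complex.conj_eq_iff_im.mp ((det_conjTranspose a).symm.trans (congrArg det ha.eq))

section StarModule

variable {A : Type*} [AddCommGroup A] [Module ℂ A] [StarAddMonoid A] [StarModule ℂ A]

noncomputable def selfAdjointSubmodule (R : Submodule ℂ A) : Submodule ℝ A :=
  R.restrictScalars ℝ ⊓ selfAdjoint.submodule ℝ A

theorem realPart_mem_selfAdjointSubmodule {R : Submodule ℂ A} (hR : ∀ a ∈ R, star a ∈ R)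
    {a : A} (ha : a ∈ R) : (ℜ a : A) ∈ selfAdjointSubmodule R :=
  ⟨by rw [realPart_apply_coe]; exact R.smul_of_tower_mem _ (R.add_mem ha (hR a ha)),
    (ℜ a).2⟩

theorem imaginaryPart_mem_selfAdjointSubmodule {R : Submodule ℂ A} (hR : ∀ a ∈ R, star a ∈ R)
    {a : A} (ha : a ∈ R) : (ℑ a : A) ∈ selfAdjointSubmodule R :=
  ⟨by
    rw [imaginaryPart_apply_coe]
    exact R.smul_mem _ (R.smul_of_tower_mem _ (R.sub_mem ha (hR a ha))),
    (ℑ a).2⟩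

theorem finrank_le_finrank_selfAdjointSubmodule [FiniteDimensional ℂ A] {R : Submodule ℂ A}
    (hR : ∀ a ∈ R, star a ∈ R) :
    Module.finrank ℂ R ≤ Module.finrank ℝ (selfAdjointSubmodule R) := by
  set H := selfAdjointSubmodule R
  let f : H × H →ₗ[ℝ] A :=
    H.subtype.coprod ((Complex.I • LinearMap.id : A →ₗ[ℂ] A).restrictScalars ℝ ∘ₗ H.subtype)
  have hR_le : R.restrictScalars ℝ ≤ LinearMap.range f := fun a ha =>
    ⟨(⟨_, realPart_mem_selfAdjointSubmodule hR ha⟩,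
      ⟨_, imaginaryPart_mem_selfAdjointSubmodule hR ha⟩),
      realPart_add_I_smul_imaginaryPart a⟩
  have hR_real : 2 * Module.finrank ℂ R = Module.finrank ℝ (R.restrictScalars ℝ) := by
    rw [← Complex.finrank_real_complex, Module.finrank_mul_finrank]
    rfl
  have := (Submodule.finrank_mono hR_le).trans (LinearMap.finrank_range_le f)
  rw [Module.finrank_prod] at this
  omega

end StarModule

/-- a †-closed subspace of `M_n(ℂ)` with `n` odd and dimension at least `2`
contains a nonzero singular Hermitian matrix. -/
theorem stmt7 {n : ℕ} (R : Submodule ℂ (Mat n)) (hstar : ∀ a ∈ R, aᴴ ∈ R)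
    (hodd : Odd n) (hdim : 2 ≤ Module.finrank ℂ ↥R) :
    ∃ a ∈ R, a ≠ 0 ∧ a.IsHermitian ∧ a.det = 0 := by
  set H := selfAdjointSubmodule R
  have hH : 1 < Module.rank ℝ H := by
    rw [← Module.finrank_eq_rank, Nat.one_lt_cast]
    exact one_lt_two.trans_le (hdim.trans (finrank_le_finrank_selfAdjointSubmodule hstar))
  have hdet_odd : Function.Odd fun a : H => ((a : Mat n).det).re := fun a => by
    simp [det_neg, hodd.neg_one_pow]
  have hdet_cont : Continuous fun a : H => ((a : Mat n).det).re :=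
    Complex.continuous_re.comp continuous_subtype_val.matrix_det
  obtain ⟨⟨a, haR, ha_herm⟩, ha0, hdet⟩ := exists_ne_zero_eq_zero_of_odd hH hdet_cont hdet_odd
  have ha_herm : a.IsHermitian := ha_herm
  exact ⟨a, haR, fun h => ha0 (Subtype.ext h), ha_herm,
    Complex.ext hdet (im_det_eq_zero_of_isHermitian ha_herm)⟩

end QG
end

section
/- Let R ≤ M_n(ℂ) be a subspace with R† = R, and assume that n is odd. If dim(R) ≥ 2, then R has a Hermitian orthonormal basis such that at most one basis element is invertible. -/
namespace QG

open Matrix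

/-! The Hermitian elements of `R` form a real inner product space `H` under `Re tr (xᴴ y) / n`,
and an orthonormal basis of `H` is a Hermitian orthonormal basis of `R`. As `n` is odd,
`x ↦ Re (det x)` is an odd function on `H`. For orthonormal `u`, `v` it therefore has a zero `w`
on the half circle `cos θ • u + sin θ • v`, `0 ≤ θ ≤ π`, from `u` to `-u`. If `u` and `v` are
invertible basis elements, replacing `u` by `w` (by a reflection, which fixes the basis vectors
orthogonal to `u` and `v`) lowers the number of invertible basis elements; hence an orthonormal
basis minimizing this number has at most one. -/

section OrthonormalBasis

open Real InnerProductSpace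

lemma exists_cos_smul_add_sin_smul_eq_zero {E : Type*} [AddCommGroup E] [Module ℝ E]
    {f : E → ℝ} {u v : E} (hf : Continuous fun θ : ℝ => f (cos θ • u + sin θ • v))
    (hodd : f (-u) = -f u) : ∃ θ : ℝ, f (cos θ • u + sin θ • v) = 0 := by
  have h0 : (0 : ℝ) ∈ Set.uIcc (f u) (f (-u)) := by
    rw [hodd, Set.mem_uIcc]
    rcases le_total 0 (f u) with h | h <;> [right; left] <;> constructor <;> linarith
  obtain ⟨θ, -, hθ⟩ := intermediate_value_uIcc (a := 0) (b := π) hf.continuousOn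
    (by simpa using h0)
  exact ⟨θ, hθ⟩

variable {E : Type*} [NormedAddCommGroup E] [InnerProductSpace ℝ E]

lemma norm_cos_smul_add_sin_smul {u v : E} (hu : ‖u‖ = 1) (hv : ‖v‖ = 1) (huv : ⟪u, v⟫_ℝ = 0)
    (θ : ℝ) : ‖cos θ • u + sin θ • v‖ = 1 := by
  have h : ⟪cos θ • u, sin θ • v⟫_ℝ = 0 := by
    simp [real_inner_smul_left, real_inner_smul_right, huv]
  rw [← pow_eq_one_iff_of_nonneg (norm_nonneg _) two_ne_zero, sq,
    norm_add_sq_eq_norm_sq_add_norm_sq_real h]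
  simp [norm_smul, hu, hv, ← sq]

lemma _root_.OrthonormalBasis.exists_apply_eq_of_mem_span_pair {ι : Type*} [Fintype ι]
    (b : OrthonormalBasis ι ℝ E) {i j : ι} {w : E} (hw : w ∈ Submodule.span ℝ {b i, b j})
    (hw1 : ‖w‖ = 1) :
    ∃ b' : OrthonormalBasis ι ℝ E, b' i = w ∧ ∀ k, k ≠ i → k ≠ j → b' k = b k := by
  -- the reflection swapping `b i` and `w` fixes every vector orthogonal to `b i` and `b j`
  let ρ := (ℝ ∙ (b i - w))ᗮ.reflection
  refine ⟨b.map ρ, ?_, fun k hki hkj => ?_⟩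
  · simpa [ρ] using Submodule.reflection_sub (by simp [hw1])
  · obtain ⟨c, s, rfl⟩ := Submodule.mem_span_pair.mp hw
    have hik := b.orthonormal.2 hki.symm
    have hjk := b.orthonormal.2 hkj.symm
    simp only [OrthonormalBasis.map_apply, ρ]
    apply Submodule.reflection_mem_subspace_eq_self
    rw [Submodule.mem_orthogonal_singleton_iff_inner_right]
    simp [inner_sub_left, inner_add_left, real_inner_smul_left, hik, hjk]

/- Continuity of `f` is only asked along the curves `θ ↦ cos θ • u + sin θ • v`, so that no
topology on `E` is involved: for the subspace of Hermitian matrices below, the subspace topology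
and the inner-product topology are not definitionally equal. -/
open Classical in
theorem exists_orthonormalBasis_subsingleton_ne_zero [FiniteDimensional ℝ E] {f : E → ℝ}
    (hf : ∀ u v : E, Continuous fun θ : ℝ => f (cos θ • u + sin θ • v))
    (hodd : ∀ v, f (-v) = -f v) :
    ∃ b : OrthonormalBasis (Fin (Module.finrank ℝ E)) ℝ E,
      ∀ i j, f (b i) ≠ 0 → f (b j) ≠ 0 → i = j := by
  let support (b : OrthonormalBasis (Fin (Module.finrank ℝ E)) ℝ E) :=
    Finset.univ.filter fun k => f (b k) ≠ 0
  have : Nonempty (OrthonormalBasis (Fin (Module.finrank ℝ E)) ℝ E) :=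
    ⟨stdOrthonormalBasis ℝ E⟩
  let b := Function.argmin fun b => (support b).card
  refine ⟨b, fun i j hi hj => by_contra fun hij => ?_⟩
  -- rotating `b i` towards `b j` until `f` vanishes would remove `i` from the support
  obtain ⟨θ, hθ⟩ := exists_cos_smul_add_sin_smul_eq_zero (hf (b i) (b j)) (hodd (b i))
  obtain ⟨b', hb'i, hb'⟩ := b.exists_apply_eq_of_mem_span_pair (w := cos θ • b i + sin θ • b j)
    (Submodule.mem_span_pair.mpr ⟨_, _, rfl⟩)
    (norm_cos_smul_add_sin_smul (b.orthonormal.1 i) (b.orthonormal.1 j) (b.orthonormal.2 hij) θ)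
  have hsub : support b' ⊆ (support b).erase i := by
    intro k hk
    simp only [support, Finset.mem_filter, Finset.mem_univ, true_and, Finset.mem_erase] at hk ⊢
    have hki : k ≠ i := by rintro rfl; exact hk (hb'i ▸ hθ)
    refine ⟨hki, ?_⟩
    rcases eq_or_ne k j with rfl | hkj
    · exact hj
    · rwa [← hb' k hki hkj]
  have hlt : (support b').card < (support b).card :=
    (Finset.card_le_card hsub).trans_lt
      (Finset.card_erase_lt_of_mem (by simpa [support] using hi))
  exact Function.not_lt_argmin (fun b => (support b).card) b' hlt

end OrthonormalBasis

section SelfAdjointSubspace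

open scoped ComplexStarModule

variable {A : Type*} [AddCommGroup A] [Module ℂ A] [StarAddMonoid A] [StarModule ℂ A]

noncomputable def selfAdjointSubspace (R : Submodule ℂ A) : Submodule ℝ A :=
  R.restrictScalars ℝ ⊓ selfAdjoint.submodule ℝ A

lemma span_selfAdjointSubspace {R : Submodule ℂ A} (hR : ∀ a ∈ R, star a ∈ R) :
    Submodule.span ℂ (selfAdjointSubspace R : Set A) = R := by
  refine le_antisymm (Submodule.span_le.mpr fun a ha => ha.1) fun a ha => ?_
  have hre : (ℜ a : A) ∈ selfAdjointSubspace R :=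
    ⟨by simpa [realPart_apply_coe] using R.smul_of_tower_mem (2 : ℝ)⁻¹ (R.add_mem ha (hR a ha)),
      (ℜ a).2⟩
  have him : (ℑ a : A) ∈ selfAdjointSubspace R :=
    ⟨by simpa [imaginaryPart_apply_coe] using
      R.smul_mem (-Complex.I) (R.smul_of_tower_mem (2 : ℝ)⁻¹ (R.sub_mem ha (hR a ha))),
      (ℑ a).2⟩
  rw [← realPart_add_I_smul_imaginaryPart a]
  exact Submodule.add_mem _ (Submodule.subset_span hre)
    (Submodule.smul_mem _ _ (Submodule.subset_span him))

end SelfAdjointSubspace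

section TraceInner

open scoped ComplexOrder

lemma _root_.Matrix.IsHermitian.ofReal_re_trace_conjTranspose_mul {m : Type*} [Fintype m]
    {p q : Matrix m m ℂ} (hp : p.IsHermitian) (hq : q.IsHermitian) :
    (((pᴴ * q).trace.re : ℝ) : ℂ) = (pᴴ * q).trace := by
  refine Complex.conj_eq_iff_re.mp ?_
  rw [← Complex.star_def, ← trace_conjTranspose, conjTranspose_mul, conjTranspose_conjTranspose,
    hq.eq, hp.eq, trace_mul_comm]

lemma re_trace_conjTranspose_mul_self_nonneg {m k : Type*} [Fintype m] [Fintype k]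
    (x : Matrix m k ℂ) : 0 ≤ (xᴴ * x).trace.re :=
  (Complex.nonneg_iff.mp (posSemidef_conjTranspose_mul_self x).trace_nonneg).1

lemma re_trace_conjTranspose_mul_self_eq_zero_iff {m k : Type*} [Fintype m] [Fintype k]
    {x : Matrix m k ℂ} : (xᴴ * x).trace.re = 0 ↔ x = 0 := by
  have him := (Complex.nonneg_iff.mp (posSemidef_conjTranspose_mul_self x).trace_nonneg).2
  rw [← trace_conjTranspose_mul_self_eq_zero_iff, Complex.ext_iff]
  simp [← him]

lemma _root_.Matrix.IsHermitian.ofReal_re_det {m : Type*} [Fintype m] [DecidableEq m]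
    {p : Matrix m m ℂ} (hp : p.IsHermitian) : ((p.det.re : ℝ) : ℂ) = p.det :=
  Complex.conj_eq_iff_re.mp <| by rw [← Complex.star_def, ← det_conjTranspose, hp.eq]

lemma _root_.Matrix.IsHermitian.isUnit_iff_re_det_ne_zero {m : Type*} [Fintype m] [DecidableEq m]
    {p : Matrix m m ℂ} (hp : p.IsHermitian) :
    IsUnit p ↔ p.det.re ≠ 0 := by
  rw [isUnit_iff_isUnit_det, isUnit_iff_ne_zero, ← hp.ofReal_re_det, Complex.ofReal_ne_zero,
    Complex.ofReal_re]

variable {n : ℕ}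

/- Normalized as in `IsONBasis`: on Hermitian matrices `tr (xᴴ y)` is real, so orthonormality for
this inner product is orthonormality in the sense of `IsONBasis`. -/
@[reducible] noncomputable def traceInnerCore (R : Submodule ℂ (Mat n)) :
    InnerProductSpace.Core ℝ (selfAdjointSubspace R) where
  inner x y := ((x : Mat n)ᴴ * (y : Mat n)).trace.re / n
  conj_inner_symm x y := by
    simp only [conj_trivial]
    rw [← Complex.conj_re, ← Complex.star_def, ← trace_conjTranspose, conjTranspose_mul,
      conjTranspose_conjTranspose]
  re_inner_nonneg x := by
    rw [RCLike.re_to_real]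
    exact div_nonneg (re_trace_conjTranspose_mul_self_nonneg (x : Mat n)) n.cast_nonneg
  add_left x y z := by
    simp only [Submodule.coe_add, conjTranspose_add, add_mul, trace_add, Complex.add_re, add_div]
  smul_left x y r := by
    simp only [Submodule.coe_smul, conjTranspose_smul, smul_mul, trace_smul, conj_trivial,
      star_trivial, Complex.real_smul, Complex.re_ofReal_mul, mul_div_assoc]
  definite x hx := by
    rcases eq_or_ne n 0 with rfl | hn
    · exact Subsingleton.elim _ _
    have hre : ((x : Mat n)ᴴ * x).trace.re = 0 := by simpa [hn] using hx
    exact Subtype.ext (re_trace_conjTranspose_mul_self_eq_zero_iff.mp hre)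

end TraceInner

@[reducible] noncomputable def traceNormedAddCommGroup {n : ℕ} (R : Submodule ℂ (Mat n)) :
    NormedAddCommGroup (selfAdjointSubspace R) :=
  (traceInnerCore R).toNormedAddCommGroup

attribute [local instance] traceNormedAddCommGroup

@[reducible] noncomputable def traceInnerProductSpace {n : ℕ} (R : Submodule ℂ (Mat n)) :
    InnerProductSpace ℝ (selfAdjointSubspace R) :=
  InnerProductSpace.ofCore (traceInnerCore R).toCore

attribute [local instance] traceInnerProductSpace

lemma isONBasis_coe_orthonormalBasis {n d : ℕ} {R : Submodule ℂ (Mat n)} (hR : ∀ a ∈ R, aᴴ ∈ R)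
    (b : OrthonormalBasis (Fin d) ℝ (selfAdjointSubspace R)) :
    IsONBasis R fun i => (b i : Mat n) := by
  refine ⟨fun i => (b i).2.1, ?_, fun i j => ?_⟩
  · have hspan : Submodule.span ℝ (Set.range fun i => (b i : Mat n)) = selfAdjointSubspace R := by
      rw [Set.range_comp', ← Submodule.coe_subtype, Submodule.span_image, ← b.coe_toBasis,
        b.toBasis.span_eq, Submodule.map_subtype_top]
    rw [← Submodule.span_span_of_tower ℝ, hspan]
    exact span_selfAdjointSubspace hR
  · have hH : ∀ k, (b k : Mat n).IsHermitian := fun k => (b k).2.2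
    have h : ((b i : Mat n)ᴴ * b j).trace.re / n = if i = j then 1 else 0 :=
      orthonormal_iff_ite.mp b.orthonormal i j
    rw [← (hH i).ofReal_re_trace_conjTranspose_mul (hH j), ← Complex.ofReal_natCast,
      ← Complex.ofReal_div, h]
    split_ifs <;> simp

theorem stmt9_general {n : ℕ} (R : Submodule ℂ (Mat n)) (hstar : ∀ a ∈ R, aᴴ ∈ R)
    (hodd : Odd n) :
    ∃ (d : ℕ) (a : Fin d → Mat n), IsONBasis R a ∧ (∀ i, (a i).IsHermitian) ∧
      ∀ i j, IsUnit (a i) → IsUnit (a j) → i = j := by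
  let f : selfAdjointSubspace R → ℝ := fun x => (x : Mat n).det.re
  have hf_odd : ∀ x, f (-x) = -f x := fun x => by simp [f, det_neg, hodd.neg_one_pow]
  have hf : ∀ u v : selfAdjointSubspace R,
      Continuous fun θ : ℝ => f (Real.cos θ • u + Real.sin θ • v) :=
    fun u v => by simp only [f, Submodule.coe_add, Submodule.coe_smul]; fun_prop
  obtain ⟨b, hb⟩ := exists_orthonormalBasis_subsingleton_ne_zero hf hf_odd
  have hH : ∀ i, (b i : Mat n).IsHermitian := fun i => (b i).2.2
  refine ⟨_, _, isONBasis_coe_orthonormalBasis hstar b, hH, fun i j hi hj => hb i j ?_ ?_⟩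
  · exact (hH i).isUnit_iff_re_det_ne_zero.mp hi
  · exact (hH j).isUnit_iff_re_det_ne_zero.mp hj

/-- a †-closed subspace of `M_n(ℂ)` with `n` odd and dimension at least `2`
has a Hermitian orthonormal basis with at most one invertible basis element. -/
theorem stmt9 {n : ℕ} (R : Submodule ℂ (Mat n)) (hstar : ∀ a ∈ R, aᴴ ∈ R)
    (hodd : Odd n) (hdim : 2 ≤ Module.finrank ℂ ↥R) :
    ∃ (d : ℕ) (a : Fin d → Mat n), IsONBasis R a ∧ (∀ i, (a i).IsHermitian) ∧
      ∀ i j, IsUnit (a i) → IsUnit (a j) → i = j :=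
  stmt9_general R hstar hodd

end QG
end

section
/- Let θ_1, θ_2 ∈ ℝ. Then VT^3_3(θ_1) is isomorphic to VT^3_3(θ_2) if and only if θ_1 + θ_2 ∈ πℤ or θ_1 − θ_2 ∈ πℤ. -/
/-!
Rescaling the generators, `VT33 θ` is spanned by `e₂₃ + e₃₂`, `e₁₃ + e₃₁` and `e₁₂ + z e₂₁`
with `z = e^{2iθ}`. Conjugation by a unitary preserves the bilinear form `Tr (a b)` and the
alternating trilinear form `T (a, b, c) = Tr (a [b, c])`. If it carries a triple `M` into the span
of a triple `N` with transition matrix `q`, then the Gram matrices satisfy `G(M) = q G(N) qᵀ` and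
`T(M) = det q · T(N)`, so `T(M)² · det G(N) = T(N)² · det G(M)`. For the triples above this reads
`(1 - z₁)² · 8 z₂ = (1 - z₂)² · 8 z₁`, i.e. `z₁ = z₂` or `z₁ z₂ = 1`; the case `z₁ z₂ = 1` is
realised by conjugating with the transposition of the first two basis vectors.
-/

namespace QG

open Matrix

/-- `VT33 θ` is spanned by `√(3/2)(e₂₃+e₃₂)`, `√(3/2)(e₁₃+e₃₁)` and
`√(3/2)(e^{-iθ}e₁₂ + e^{iθ}e₂₁)`. -/
noncomputable def VT33 (θ : ℝ) : Submodule ℂ (Mat 3) :=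
  Submodule.span ℂ
    { ((Real.sqrt (3/2) : ℝ) : ℂ) • !![0,0,0; 0,0,1; 0,1,0],
      ((Real.sqrt (3/2) : ℝ) : ℂ) • !![0,0,1; 0,0,0; 1,0,0],
      ((Real.sqrt (3/2) : ℝ) : ℂ) • !![0, Complex.exp (-(θ : ℂ) * Complex.I), 0;
        Complex.exp ((θ : ℂ) * Complex.I), 0, 0; 0, 0, 0] }

theorem _root_.AlternatingMap.apply_sum_smul_eq_det_mul {R M ι : Type*} [CommRing R]
    [AddCommGroup M] [Module R M] [Fintype ι] [DecidableEq ι] (f : M [⋀^ι]→ₗ[R] R)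
    (q : Matrix ι ι R) (v : ι → M) : f (fun a => ∑ i, q a i • v i) = q.det * f v := by
  calc f (fun a => ∑ i, q a i • v i) = f.compLinearMap (Fintype.linearCombination R v) q := rfl
    _ = q.det * f v := by
      rw [AlternatingMap.eq_smul_basis_det (Pi.basisFun R ι)
        (f.compLinearMap (Fintype.linearCombination R v))]
      simp only [AlternatingMap.compLinearMap_apply, Pi.basisFun_apply,
        Fintype.linearCombination_apply_single, one_smul, Pi.basisFun_det]
      exact mul_comm (f v) q.det

theorem range_fin_three {α : Type*} (f : Fin 3 → α) : Set.range f = {f 0, f 1, f 2} := by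
  ext x
  simp [Fin.exists_fin_succ, eq_comm]

section TraceForms

variable {m R : Type*} [Fintype m] [CommRing R]

noncomputable def traceCommForm [DecidableEq m] : Matrix m m R [⋀^Fin 3]→ₗ[R] R where
  toMultilinearMap :=
    let T := (traceLinearMap m R R).compMultilinearMap
      (MultilinearMap.mkPiAlgebraFin R 3 (Matrix m m R))
    T - T.domDomCongr (Equiv.swap 1 2)
  map_eq_zero_of_eq' x i j hx hij := by
    fin_cases i <;> fin_cases j <;> simp_all [MultilinearMap.mkPiAlgebraFin_apply, List.ofFn_succ,
      Equiv.swap_apply_of_ne_of_ne, sub_eq_zero] <;> grind [trace_mul_comm, Matrix.mul_assoc]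

theorem traceCommForm_apply [DecidableEq m] (x : Fin 3 → Matrix m m R) :
    traceCommForm x = trace (x 0 * x 1 * x 2) - trace (x 0 * x 2 * x 1) := by
  simp [traceCommForm, MultilinearMap.mkPiAlgebraFin_apply, List.ofFn_succ,
    Equiv.swap_apply_of_ne_of_ne, Matrix.mul_assoc]

def traceGram {ι : Type*} (x : ι → Matrix m m R) : Matrix ι ι R :=
  of fun a b => trace (x a * x b)

theorem traceGram_sum_smul {ι : Type*} [Fintype ι] (q : Matrix ι ι R) (x : ι → Matrix m m R) :
    traceGram (fun a => ∑ i, q a i • x i) = q * traceGram x * qᵀ := by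
  ext a b
  simp only [traceGram, of_apply, mul_apply, transpose_apply, Finset.sum_mul, Finset.mul_sum,
    trace_sum, smul_mul_smul_comm, trace_smul, smul_eq_mul]
  exact Finset.sum_congr rfl fun _ _ => Finset.sum_congr rfl fun _ _ => by ring

end TraceForms

section Conjugation

variable {n : ℕ} {u : Mat n}

theorem conjMap_mul (hu : u ∈ unitaryGroup (Fin n) ℂ) (A B : Mat n) :
    conjMap u (A * B) = conjMap u A * conjMap u B := by
  simp only [conjMap, LinearMap.comp_apply, LinearMap.mulLeft_apply, LinearMap.mulRight_apply,
    Matrix.mul_assoc]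
  rw [← Matrix.mul_assoc uᴴ, ← star_eq_conjTranspose, Unitary.star_mul_self_of_mem hu,
    Matrix.one_mul]

theorem trace_conjMap (hu : u ∈ unitaryGroup (Fin n) ℂ) (A : Mat n) :
    trace (conjMap u A) = trace A := by
  simp only [conjMap, LinearMap.comp_apply, LinearMap.mulLeft_apply, LinearMap.mulRight_apply]
  rw [trace_mul_comm, Matrix.mul_assoc, ← star_eq_conjTranspose,
    Unitary.star_mul_self_of_mem hu, Matrix.mul_one]

theorem traceGram_conjMap (hu : u ∈ unitaryGroup (Fin n) ℂ) {ι : Type*} (x : ι → Mat n) :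
    traceGram (fun a => conjMap u (x a)) = traceGram x := by
  ext a b
  simp only [traceGram, of_apply, ← conjMap_mul hu, trace_conjMap hu]

theorem traceCommForm_conjMap (hu : u ∈ unitaryGroup (Fin n) ℂ) (x : Fin 3 → Mat n) :
    traceCommForm (fun a => conjMap u (x a)) = traceCommForm x := by
  simp only [traceCommForm_apply, ← conjMap_mul hu, trace_conjMap hu]

theorem iso_refl (R : Submodule ℂ (Mat n)) : Iso R R :=
  ⟨1, one_mem _, by
    convert Submodule.map_id R
    ext1 A
    simp [conjMap]⟩

theorem traceCommForm_sq_mul_det_traceGram_eq_of_iso {M N : Fin 3 → Mat n}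
    (h : Iso (Submodule.span ℂ (Set.range M)) (Submodule.span ℂ (Set.range N))) :
    traceCommForm M ^ 2 * (traceGram N).det = traceCommForm N ^ 2 * (traceGram M).det := by
  obtain ⟨u, hu, hmap⟩ := h
  have hmem (a : Fin 3) : conjMap u (M a) ∈ Submodule.span ℂ (Set.range N) :=
    hmap ▸ Submodule.mem_map_of_mem (Submodule.subset_span ⟨a, rfl⟩)
  choose q hq using fun a => (Submodule.mem_span_range_iff_exists_fun ℂ).1 (hmem a)
  have hconj : (fun a => conjMap u (M a)) = fun a => ∑ i, q a i • N i :=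
    funext fun a => (hq a).symm
  have hgram : traceGram M = of q * traceGram N * (of q)ᵀ := by
    rw [← traceGram_conjMap hu, hconj, ← traceGram_sum_smul]
    rfl
  have hform : traceCommForm M = (of q).det * traceCommForm N := by
    rw [← traceCommForm_conjMap hu, hconj, ← AlternatingMap.apply_sum_smul_eq_det_mul]
    rfl
  rw [hgram, hform, det_mul, det_mul, det_transpose]
  ring

end Conjugation

def vtGen (z : ℂ) : Fin 3 → Mat 3 :=
  ![!![0, 0, 0; 0, 0, 1; 0, 1, 0], !![0, 0, 1; 0, 0, 0; 1, 0, 0], !![0, 1, 0; z, 0, 0; 0, 0, 0]]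

theorem traceCommForm_vtGen (z : ℂ) : traceCommForm (vtGen z) = 1 - z := by
  simp [traceCommForm_apply, vtGen, trace_fin_three]

theorem det_traceGram_vtGen (z : ℂ) : (traceGram (vtGen z)).det = 8 * z := by
  simp [traceGram, vtGen, trace_fin_three, det_fin_three]
  ring

theorem mul_eq_one_or_eq_of_iso_span_vtGen {z₁ z₂ : ℂ}
    (h : Iso (Submodule.span ℂ (Set.range (vtGen z₁)))
      (Submodule.span ℂ (Set.range (vtGen z₂)))) :
    z₁ * z₂ = 1 ∨ z₁ = z₂ := by
  have key := traceCommForm_sq_mul_det_traceGram_eq_of_iso h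
  rw [traceCommForm_vtGen, traceCommForm_vtGen, det_traceGram_vtGen, det_traceGram_vtGen] at key
  have hfactor : (z₁ * z₂ - 1) * (z₁ - z₂) = 0 := by linear_combination key / 8
  rcases mul_eq_zero.1 hfactor with h | h
  · exact .inl (sub_eq_zero.1 h)
  · exact .inr (sub_eq_zero.1 h)

def swap12 : Mat 3 := !![0, 1, 0; 1, 0, 0; 0, 0, 1]

theorem conjTranspose_swap12 : swap12ᴴ = swap12 := by
  ext i j
  fin_cases i <;> fin_cases j <;> simp [swap12]

theorem swap12_mem_unitaryGroup : swap12 ∈ unitaryGroup (Fin 3) ℂ := by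
  rw [mem_unitaryGroup_iff, star_eq_conjTranspose, conjTranspose_swap12]
  ext i j
  fin_cases i <;> fin_cases j <;> simp [swap12]

theorem conjMap_swap12_vtGen {z : ℂ} (hz : z ≠ 0) :
    (fun a => conjMap swap12 (vtGen z a)) = ![vtGen z⁻¹ 1, vtGen z⁻¹ 0, z • vtGen z⁻¹ 2] := by
  funext a
  simp only [conjMap, LinearMap.comp_apply, LinearMap.mulLeft_apply, LinearMap.mulRight_apply,
    conjTranspose_swap12]
  fin_cases a <;> ext i j <;> fin_cases i <;> fin_cases j <;> simp [swap12, vtGen, hz]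

theorem iso_span_vtGen_inv {z : ℂ} (hz : z ≠ 0) :
    Iso (Submodule.span ℂ (Set.range (vtGen z))) (Submodule.span ℂ (Set.range (vtGen z⁻¹))) := by
  refine ⟨swap12, swap12_mem_unitaryGroup, ?_⟩
  rw [Submodule.map_span, ← Set.range_comp, Function.comp_def, conjMap_swap12_vtGen hz]
  simp only [range_fin_three, cons_val_zero, cons_val_one, cons_val_two, tail_cons, head_cons,
    Submodule.span_insert, Submodule.span_singleton_smul_eq (IsUnit.mk0 z hz), sup_left_comm]

theorem iso_span_vtGen_iff (z₁ z₂ : ℂ) :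
    Iso (Submodule.span ℂ (Set.range (vtGen z₁))) (Submodule.span ℂ (Set.range (vtGen z₂))) ↔
      z₁ * z₂ = 1 ∨ z₁ = z₂ := by
  refine ⟨mul_eq_one_or_eq_of_iso_span_vtGen, ?_⟩
  rintro (h | rfl)
  · rw [eq_inv_of_mul_eq_one_right h]
    exact iso_span_vtGen_inv (left_ne_zero_of_mul_eq_one h)
  · exact iso_refl _

section Exponential

open Complex

theorem VT33_eq_span_vtGen (θ : ℝ) :
    VT33 θ = Submodule.span ℂ (Set.range (vtGen (exp (2 * θ * I)))) := by
  have hs : IsUnit ((√(3/2) : ℝ) : ℂ) := IsUnit.mk0 _ (by simp)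
  have hthird : ((√(3/2) : ℝ) : ℂ) • !![0, exp (-θ * I), 0; exp (θ * I), 0, 0; 0, 0, 0]
      = (((√(3/2) : ℝ) : ℂ) * exp (-θ * I)) • vtGen (exp (2 * θ * I)) 2 := by
    have hexp : exp (-(θ * I)) * exp (2 * θ * I) = exp (θ * I) := by rw [← exp_add]; ring_nf
    rw [mul_smul]
    congr 1
    ext i j
    fin_cases i <;> fin_cases j <;> simp [vtGen, hexp]
  rw [VT33, hthird, range_fin_three]
  simp only [Submodule.span_insert, Submodule.span_singleton_smul_eq hs,
    Submodule.span_singleton_smul_eq (hs.mul (exp_ne_zero _).isUnit)]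
  rfl

theorem exp_two_mul_I_eq_one_iff (x : ℝ) : exp (2 * x * I) = 1 ↔ ∃ k : ℤ, x = k * Real.pi := by
  rw [exp_eq_one_iff]
  refine exists_congr fun k => ⟨fun h => ?_, fun h => by rw [h]; push_cast; ring⟩
  have him : 2 * x = k * (2 * Real.pi) := by simpa using congrArg im h
  linarith

theorem exp_two_mul_I_mul_exp_two_mul_I_eq_one_iff (x y : ℝ) :
    exp (2 * x * I) * exp (2 * y * I) = 1 ↔ ∃ k : ℤ, x + y = k * Real.pi := by
  rw [← exp_two_mul_I_eq_one_iff, ← exp_add]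
  push_cast
  ring_nf

theorem exp_two_mul_I_eq_exp_two_mul_I_iff (x y : ℝ) :
    exp (2 * x * I) = exp (2 * y * I) ↔ ∃ k : ℤ, x - y = k * Real.pi := by
  rw [← exp_two_mul_I_eq_one_iff, exp_eq_exp_iff_exp_sub_eq_one]
  push_cast
  ring_nf

end Exponential

/-- `VT33 θ₁ ≅ VT33 θ₂` iff `θ₁ + θ₂ ∈ πℤ` or `θ₁ - θ₂ ∈ πℤ`. -/
theorem stmt12 (θ₁ θ₂ : ℝ) :
    Iso (VT33 θ₁) (VT33 θ₂) ↔
      ((∃ k : ℤ, θ₁ + θ₂ = k * Real.pi) ∨ (∃ k : ℤ, θ₁ - θ₂ = k * Real.pi)) := by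
  rw [VT33_eq_span_vtGen, VT33_eq_span_vtGen, iso_span_vtGen_iff,
    exp_two_mul_I_mul_exp_two_mul_I_eq_one_iff, exp_two_mul_I_eq_exp_two_mul_I_iff]

end QG
end

section
/- Let R ≤ M_3(ℂ) be a regular quantum graph. If dim(R) = 4, then R is connected. -/
namespace QG

open Matrix

/-- `R` is connected if the unital star-subalgebra it generates is all of `M_n(ℂ)`. -/
def IsConnected {n : ℕ} (R : Submodule ℂ (Mat n)) : Prop :=
  StarAlgebra.adjoin ℂ (R : Set (Mat n)) = ⊤



lemma trace_star_mul_self {n : ℕ} (x : Mat n) :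
    (xᴴ * x).trace = ((∑ j, ∑ i, Complex.normSq (x i j) : ℝ) : ℂ) := by
  push_cast
  simp [Matrix.trace, Matrix.diag, Matrix.mul_apply, Matrix.conjTranspose_apply,
    Complex.normSq_eq_conj_mul_self]

lemma commute_diagonal_fun {n : ℕ} (v : Fin n → ℂ) (g : ℂ → ℂ) (b : Mat n)
    (h : b * diagonal v = diagonal v * b) :
    b * diagonal (fun k => g (v k)) = diagonal (fun k => g (v k)) * b := by
  ext i j
  have h' := congrFun (congrFun h i) j
  simp only [Matrix.mul_diagonal, Matrix.diagonal_mul] at h' ⊢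
  by_cases hv : v i = v j
  · rw [hv, mul_comm]
  · have hb : b i j = 0 := by
      by_contra hb
      exact hv (mul_left_cancel₀ hb (by rw [mul_comm (b i j) (v j)] at h'; linear_combination h')).symm
    simp [hb]


lemma exists_unique_class (d : Fin 3 → ℝ) (h : ¬ ∀ k, d k = d 0) :
    ∃ j, ∀ k, d k = d j → k = j := by
  by_cases h10 : d 1 = d 0
  · have h20 : d 2 ≠ d 0 := by
      intro h20; apply h; intro k; fin_cases k <;> simp [h10, h20]
    refine ⟨2, fun k hk => ?_⟩
    fin_cases k
    · exact absurd hk.symm h20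
    · exact absurd (h10 ▸ hk.symm : d 2 = d 0) h20
    · rfl
  · by_cases h20 : d 2 = d 0
    · refine ⟨1, fun k hk => ?_⟩
      fin_cases k
      · exact absurd hk.symm h10
      · rfl
      · exact absurd (h20.symm.trans hk) (fun e => h10 e.symm)
    · refine ⟨0, fun k hk => ?_⟩
      fin_cases k
      · rfl
      · exact absurd hk h10
      · exact absurd hk h20


lemma core (c : Fin 4 → Mat 3) (j₀ : Fin 3)
    (horth : ∀ i j, ((c i)ᴴ * (c j)).trace = if i = j then 3 else 0)
    (hreg : (∑ i, c i * (c i)ᴴ) = (4:ℂ) • (1 : Mat 3))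
    (hcomm : ∀ i, c i * Matrix.single j₀ j₀ 1 = Matrix.single j₀ j₀ 1 * c i) :
    False := by
  set E : Mat 3 := Matrix.single j₀ j₀ 1 with hE
  set β : Fin 4 → ℂ := fun i => c i j₀ j₀ with hβ
  have hrow : ∀ i k, k ≠ j₀ → c i j₀ k = 0 := by
    intro i k hk
    have h := congrFun (congrFun (hcomm i) j₀) k
    simp [E, Matrix.mul_apply, Matrix.single, Finset.sum_ite_eq, Ne.symm hk] at h
    simpa [hk, Ne.symm hk] using h.symm
  have hS : (∑ i, β i * star (β i)) = 4 := by
    have h := congrFun (congrFun hreg j₀) j₀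
    rw [Matrix.sum_apply] at h
    have h1 : ∀ i, (c i * (c i)ᴴ) j₀ j₀ = β i * star (β i) := by
      intro i
      rw [Matrix.mul_apply]
      rw [Finset.sum_eq_single j₀]
      · simp [Matrix.conjTranspose_apply, hβ]
      · intro b _ hb; simp [hrow i b hb, Matrix.conjTranspose_apply]
      · simp
    simp only [h1] at h
    simpa using h
  have hEH : Eᴴ = E := by
    ext i j; simp [E, Matrix.single, Matrix.conjTranspose_apply, and_comm]
  have htr1 : ∀ M : Mat 3, (E * M).trace = M j₀ j₀ := by
    intro M
    simp [Matrix.trace, Matrix.diag, Matrix.mul_apply, E, Matrix.single, ite_and,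
      Finset.sum_ite_eq]
  have htr2 : ∀ M : Mat 3, (M * E).trace = M j₀ j₀ := by
    intro M
    rw [Matrix.trace_mul_comm]; exact htr1 M
  set S : ℂ := ∑ i, β i * star (β i) with hSdef
  set s : Mat 3 := ∑ i, (star (β i) / 3) • c i with hs
  set s' : Mat 3 := ∑ i, (β i / 3) • (c i)ᴴ with hs'
  set y : Mat 3 := E - s with hy
  have hyH : yᴴ = E - s' := by
    rw [hy, Matrix.conjTranspose_sub, hEH, hs, Matrix.conjTranspose_sum, hs']
    congr 1
    refine Finset.sum_congr rfl fun i _ => ?_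
    rw [Matrix.conjTranspose_smul]
    congr 1
    simp
  have hprod : yᴴ * y = E * E - E * s - s' * E + s' * s := by
    rw [hyH, hy]; noncomm_ring
  have tE : (E * E).trace = 1 := by
    rw [htr1]; simp [E, Matrix.single]
  have tEs : (E * s).trace = S / 3 := by
    rw [hs, Matrix.mul_sum, Matrix.trace_sum, hSdef, Finset.sum_div]
    refine Finset.sum_congr rfl fun i _ => ?_
    rw [Matrix.mul_smul, Matrix.trace_smul, htr1]
    simp only [smul_eq_mul]
    ring
  have ts'E : (s' * E).trace = S / 3 := by
    rw [hs', Matrix.sum_mul, Matrix.trace_sum, hSdef, Finset.sum_div]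
    refine Finset.sum_congr rfl fun i _ => ?_
    rw [Matrix.smul_mul, Matrix.trace_smul, htr2]
    simp only [smul_eq_mul, Matrix.conjTranspose_apply]
    ring
  have ts's : (s' * s).trace = S / 3 := by
    rw [hs', hs, Matrix.sum_mul, Matrix.trace_sum, hSdef, Finset.sum_div]
    refine Finset.sum_congr rfl fun i _ => ?_
    rw [Matrix.smul_mul, Matrix.mul_sum, Matrix.trace_smul]
    rw [Matrix.trace_sum]
    rw [Finset.sum_eq_single i]
    · rw [Matrix.mul_smul, Matrix.trace_smul, horth]
      simp only [if_pos rfl, smul_eq_mul, if_true, eq_self_iff_true]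
      ring
    · intro b _ hb
      rw [Matrix.mul_smul, Matrix.trace_smul, horth]
      simp [Ne.symm hb]
    · simp
  have hfin : (yᴴ * y).trace = 1 - 4/3 := by
    rw [hprod, Matrix.trace_add, Matrix.trace_sub, Matrix.trace_sub, tE, tEs, ts'E, ts's, hS]
    ring
  rw [trace_star_mul_self] at hfin
  have hre := congrArg Complex.re hfin
  simp only [Complex.ofReal_re] at hre
  have hnn : (0:ℝ) ≤ ∑ j, ∑ i, Complex.normSq (y i j) :=
    Finset.sum_nonneg fun j _ => Finset.sum_nonneg fun i _ => Complex.normSq_nonneg _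
  rw [hre] at hnn
  norm_num at hnn

noncomputable def vecE : Mat 3 ≃ₗ[ℂ] EuclideanSpace ℂ (Fin 3 × Fin 3) where
  toFun x := WithLp.toLp 2 (fun p : Fin 3 × Fin 3 => x p.1 p.2)
  map_add' x y := rfl
  map_smul' c x := rfl
  invFun v := Matrix.of fun i j => v (i, j)
  left_inv x := rfl
  right_inv v := rfl

lemma inner_vecE (x y : Mat 3) :
    (inner ℂ (vecE x) (vecE y) : ℂ) = (xᴴ * y).trace := by
  simp only [PiLp.inner_apply, RCLike.inner_apply, vecE, LinearEquiv.coe_mk]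
  rw [Fintype.sum_prod_type]
  rw [Finset.sum_comm]
  simp [Matrix.trace, Matrix.diag, Matrix.mul_apply, Matrix.conjTranspose_apply]
  exact Finset.sum_congr rfl fun _ _ => Finset.sum_congr rfl fun _ _ => mul_comm _ _

theorem commutant_trivial_top (A : StarSubalgebra ℂ (Mat 3))
    (hC : ∀ x : Mat 3, (∀ a ∈ A, x * a = a * x) → ∃ κ : ℂ, x = κ • (1 : Mat 3)) :
    A = ⊤ := by
  classical
  set V : Submodule ℂ (EuclideanSpace ℂ (Fin 3 × Fin 3)) :=
    (Subalgebra.toSubmodule A.toSubalgebra).map vecE.toLinearMap with hV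
  have memV : ∀ u, u ∈ V ↔ ∃ m ∈ A, vecE m = u := by
    intro u
    rw [hV, Submodule.mem_map]
    constructor
    · rintro ⟨m, hm, rfl⟩
      exact ⟨m, (StarSubalgebra.mem_toSubalgebra).1 ((Subalgebra.mem_toSubmodule _).1 hm), rfl⟩
    · rintro ⟨m, hm, rfl⟩
      exact ⟨m, (Subalgebra.mem_toSubmodule _).2 ((StarSubalgebra.mem_toSubalgebra).2 hm), rfl⟩
  set P : Mat 3 →ₗ[ℂ] Mat 3 :=
    vecE.symm.toLinearMap ∘ₗ (V.subtype ∘ₗ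
      (Submodule.orthogonalProjectionOnto V : _ →L[ℂ] V).toLinearMap) ∘ₗ vecE.toLinearMap with hP
  have hPapply : ∀ x : Mat 3, P x = vecE.symm ((Submodule.orthogonalProjectionOnto V (vecE x) : _)) :=
    fun x => rfl
  have hPmem : ∀ x, P x ∈ A := by
    intro x
    have h0 : ((Submodule.orthogonalProjectionOnto V (vecE x) : EuclideanSpace ℂ (Fin 3 × Fin 3))) ∈ V :=
      SetLike.coe_mem _
    rw [memV] at h0
    obtain ⟨m, hm, hme⟩ := h0
    rw [hPapply, ← hme, LinearEquiv.symm_apply_apply]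
    exact hm
  have hPfix : ∀ m, m ∈ A → P m = m := by
    intro m hm
    have hmV : vecE m ∈ V := (memV _).2 ⟨m, hm, rfl⟩
    have := Submodule.orthogonalProjectionOnto_mem_subspace_eq_self (K := V) ⟨vecE m, hmV⟩
    rw [hPapply]
    rw [show ((⟨vecE m, hmV⟩ : V) : EuclideanSpace ℂ (Fin 3 × Fin 3)) = vecE m from rfl] at this
    rw [this]
    exact vecE.symm_apply_apply m
  have hPzero : ∀ x : Mat 3, vecE x ∈ Vᗮ → P x = 0 := by
    intro x hx
    rw [hPapply, Submodule.orthogonalProjectionOnto_apply_of_mem_orthogonal hx]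
    simp
  have hsubperp : ∀ x : Mat 3, vecE (x - P x) ∈ Vᗮ := by
    intro x
    have := Submodule.sub_starProjection_mem_orthogonal (K := V) (vecE x)
    rw [map_sub]
    exact this
  have hPcomm : ∀ a, a ∈ A → ∀ x : Mat 3, P (a * x) = a * P x := by
    intro a ha x
    have hsplit : a * x = a * P x + a * (x - P x) := by noncomm_ring
    have h1 : P (a * P x) = a * P x := hPfix _ (mul_mem ha (hPmem x))
    have h2 : P (a * (x - P x)) = 0 := by
      apply hPzero
      rw [Submodule.mem_orthogonal]
      intro u hu
      rw [memV] at hu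
      obtain ⟨m, hm, rfl⟩ := hu
      rw [inner_vecE]
      have key : (mᴴ * (a * (x - P x))).trace = ((aᴴ * m)ᴴ * (x - P x)).trace := by
        rw [Matrix.conjTranspose_mul, Matrix.conjTranspose_conjTranspose, Matrix.mul_assoc]
      rw [key, ← inner_vecE]
      have hmem2 : vecE (aᴴ * m) ∈ V := (memV _).2 ⟨aᴴ * m, mul_mem (star_mem ha) hm, rfl⟩
      exact (Submodule.mem_orthogonal V _).1 (hsubperp x) _ hmem2
    rw [hsplit, map_add, h1, h2, add_zero]
  -- blocks
  set B : Fin 3 → Fin 3 → Mat 3 :=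
    fun j l => Matrix.of fun i k => P (Matrix.single k l 1) i j with hB
  have hmulstd : ∀ (a : Mat 3) (k l : Fin 3),
      a * Matrix.single k l (1:ℂ) = ∑ m, a m k • Matrix.single m l 1 := by
    intro a k l
    ext i j
    simp only [Matrix.mul_apply, Matrix.single, Matrix.of_apply, Matrix.sum_apply,
      Matrix.smul_apply, Pi.smul_apply, smul_eq_mul, mul_ite, mul_one, mul_zero, ite_and]
    rw [Finset.sum_ite_eq Finset.univ k (fun x => if l = j then a i x else 0),
      Finset.sum_ite_eq' Finset.univ i (fun c => if l = j then a c k else 0)]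
    simp
  have hBcomm : ∀ a, a ∈ A → ∀ j l, B j l * a = a * B j l := by
    intro a ha j l
    ext i k
    have e1 : (B j l * a) i k = P (a * Matrix.single k l 1) i j := by
      rw [hmulstd, map_sum]
      rw [Matrix.mul_apply]
      rw [Matrix.sum_apply]
      refine Finset.sum_congr rfl fun m _ => ?_
      rw [LinearMap.map_smul]
      simp [hB, mul_comm]
    have e2 : (a * B j l) i k = (a * P (Matrix.single k l 1)) i j := by
      simp [Matrix.mul_apply, hB]
    rw [e1, e2, hPcomm a ha]
  have hBscalar : ∀ j l, ∃ κ : ℂ, B j l = κ • (1 : Mat 3) := by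
    intro j l
    exact hC (B j l) (fun a ha => hBcomm a ha j l)
  choose lam hlam using hBscalar
  have hPentry : ∀ (x : Mat 3) (i j : Fin 3), P x i j = ∑ l, x i l * lam j l := by
    intro x i j
    conv_lhs => rw [matrix_eq_sum_single x]
    rw [map_sum, Matrix.sum_apply]
    have : ∀ k, (P (∑ l, Matrix.single k l (x k l))) i j
        = ∑ l, x k l * (lam j l * (1 : Mat 3) i k) := by
      intro k
      rw [map_sum, Matrix.sum_apply]
      refine Finset.sum_congr rfl fun l _ => ?_
      have : Matrix.single k l (x k l) = x k l • Matrix.single k l 1 := by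
        rw [Matrix.smul_single, smul_eq_mul, mul_one]
      rw [this, LinearMap.map_smul]
      have hBe : P (Matrix.single k l 1) i j = B j l i k := rfl
      simp only [Matrix.smul_apply, smul_eq_mul]
      rw [hBe, hlam j l]
      simp [Matrix.smul_apply]
    rw [Finset.sum_congr rfl fun k _ => this k]
    rw [Finset.sum_comm]
    refine Finset.sum_congr rfl fun l _ => ?_
    rw [Finset.sum_eq_single i]
    · simp [Matrix.one_apply]
    · intro b _ hb; simp [Matrix.one_apply, Ne.symm hb, hb]
    · simp
  have hlamval : ∀ j l, lam j l = if l = j then 1 else 0 := by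
    intro j l
    have h1 := hPfix 1 (one_mem A)
    have := congrFun (congrFun h1 l) j
    rw [hPentry] at this
    rw [Finset.sum_eq_single l] at this
    · simp [Matrix.one_apply] at this
      simpa [Matrix.one_apply] using this
    · intro b _ hb; simp [Matrix.one_apply, Ne.symm hb, hb]
    · simp
  have hPid : ∀ x : Mat 3, P x = x := by
    intro x
    ext i j
    rw [hPentry, Finset.sum_congr rfl fun l _ => by rw [hlamval]]
    rw [Finset.sum_eq_single j] <;> simp +contextual
  rw [eq_top_iff]
  intro x _
  rw [← hPid x]
  exact hPmem x


lemma onb_li {d : ℕ} (a : Fin d → Mat 3)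
    (horth : ∀ i j, ((a i)ᴴ * a j).trace = if i = j then 3 else 0) :
    LinearIndependent ℂ a := by
  rw [linearIndependent_iff']
  intro s g hsum i hi
  have h := congrArg (fun M => ((a i)ᴴ * M).trace) hsum
  simp only [Matrix.mul_sum, Matrix.mul_smul, Matrix.trace_sum, Matrix.trace_smul,
    horth, smul_eq_mul, mul_ite, mul_zero, Matrix.mul_zero, Matrix.trace_zero] at h
  rw [Finset.sum_ite_eq s i (fun j => g j * 3)] at h
  rw [if_pos hi] at h
  have : g i = 0 ∨ (3:ℂ) = 0 := mul_eq_zero.1 h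
  rcases this with h' | h'
  · exact h'
  · norm_num at h'
lemma exists_herm_nonscalar (x : Mat 3) (hns : ∀ κ : ℂ, x ≠ κ • (1 : Mat 3)) :
    ∃ h : Mat 3, hᴴ = h ∧ (∀ κ : ℂ, h ≠ κ • (1 : Mat 3)) ∧
      (h = x + xᴴ ∨ h = Complex.I • (x - xᴴ)) := by
  by_cases hcase : ∀ κ : ℂ, x + xᴴ ≠ κ • (1 : Mat 3)
  · refine ⟨x + xᴴ, ?_, hcase, Or.inl rfl⟩
    rw [Matrix.conjTranspose_add, Matrix.conjTranspose_conjTranspose, add_comm]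
  · push_neg at hcase
    obtain ⟨κ, hκ⟩ := hcase
    refine ⟨Complex.I • (x - xᴴ), ?_, ?_, Or.inr rfl⟩
    · rw [Matrix.conjTranspose_smul, Matrix.conjTranspose_sub,
        Matrix.conjTranspose_conjTranspose]
      rw [show star Complex.I = -Complex.I from Complex.conj_I]
      rw [neg_smul, smul_sub, smul_sub]
      abel
    · intro κ₂ hκ₂
      apply hns ((κ - Complex.I * κ₂) / 2)
      have hx2 : x - xᴴ = (-Complex.I * κ₂) • (1 : Mat 3) := by
        have := congrArg (fun M => (-Complex.I) • M) hκ₂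
        simp only [smul_smul] at this
        rw [show (-Complex.I) * Complex.I = 1 by simp [Complex.I_mul_I]] at this
        simpa [neg_mul] using this
      have : x + xᴴ + (x - xᴴ) = κ • (1 : Mat 3) + (-Complex.I * κ₂) • (1 : Mat 3) := by
        rw [hκ, hx2]
      have h2x : (2:ℂ) • x = (κ + -Complex.I * κ₂) • (1 : Mat 3) := by
        rw [← add_smul] at this
        rw [← this]
        rw [two_smul]
        abel
      have := congrArg (fun M => ((2:ℂ)⁻¹) • M) h2x
      simp only [smul_smul] at this
      rw [show (2:ℂ)⁻¹ * 2 = 1 by norm_num, one_smul] at this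
      rw [this]
      congr 1
      ring


-- diagonal of indicator equals Matrix.single
lemma diag_indicator_eq_std (dv : Fin 3 → ℝ) (j₀ : Fin 3)
    (hj₀ : ∀ k, dv k = dv j₀ → k = j₀) :
    (diagonal (fun k => if ((dv k : ℂ)) = ((dv j₀ : ℂ)) then (1:ℂ) else 0) : Mat 3)
      = Matrix.single j₀ j₀ 1 := by
  ext i j
  rw [Matrix.diagonal_apply, Matrix.single]
  simp only [Matrix.of_apply]
  by_cases hij : i = j
  · subst hij
    by_cases hi : i = j₀
    · subst hi; rw [if_pos rfl, if_pos rfl, if_pos ⟨rfl, rfl⟩]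
    · have : dv i ≠ dv j₀ := fun hc => hi (hj₀ i hc)
      have : ((dv i : ℂ)) ≠ ((dv j₀ : ℂ)) := fun hc => this (Complex.ofReal_inj.mp hc)
      rw [if_pos rfl, if_neg this, if_neg (fun hc : j₀ = i ∧ j₀ = i => hi hc.1.symm)]
  · rw [if_neg hij, if_neg (fun hc => hij (hc.1.symm.trans hc.2))]

/-- a regular 4-dimensional quantum graph in `M_3(ℂ)` is connected. -/
theorem stmt14 (R : Submodule ℂ (Mat 3)) (hQG : IsQuantumGraph R)
    (hreg : IsRegular R) (hdim : Module.finrank ℂ ↥R = 4) : IsConnected R := by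
  obtain ⟨d, a, ⟨hmem, hspan, h3⟩, c, hsum⟩ := hreg
  have horth : ∀ i j, ((a i)ᴴ * a j).trace = if i = j then 3 else 0 := by
    intro i j
    have h := h3 i j
    have h3ne : ((3:ℕ):ℂ) ≠ 0 := by norm_num
    rw [div_eq_iff h3ne] at h
    rw [h]
    split_ifs <;> norm_num
  have hli := onb_li a horth
  have hd : d = 4 := by
    have hfr : Module.finrank ℂ (Submodule.span ℂ (Set.range a)) = d := by
      rw [finrank_span_eq_card hli, Fintype.card_fin]
    rw [hspan, hdim] at hfr
    exact hfr.symm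
  subst hd
  have hc : c = 4 := by
    have h := congrArg Matrix.trace hsum
    rw [Matrix.trace_sum, Matrix.trace_smul, Matrix.trace_one] at h
    have h3' : ∀ i, (a i * (a i)ᴴ).trace = 3 := by
      intro i; rw [Matrix.trace_mul_comm, horth]; simp
    rw [Finset.sum_congr rfl (fun i _ => h3' i)] at h
    simp only [Finset.sum_const, Finset.card_univ, Fintype.card_fin, nsmul_eq_mul,
      smul_eq_mul] at h
    push_cast at h
    linear_combination -h / 3
  rw [hc] at hsum
  show StarAlgebra.adjoin ℂ (R : Set (Mat 3)) = ⊤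
  apply commutant_trivial_top
  intro x hx
  by_contra hns
  push_neg at hns
  obtain ⟨h, hherm, hnsh, hform⟩ := exists_herm_nonscalar x hns
  have haA : ∀ i, a i ∈ StarAlgebra.adjoin ℂ (R : Set (Mat 3)) :=
    fun i => StarAlgebra.subset_adjoin ℂ _ (hmem i)
  have hxHcomm : ∀ a' ∈ StarAlgebra.adjoin ℂ (R : Set (Mat 3)), xᴴ * a' = a' * xᴴ := by
    intro a' ha'
    have h2 := hx (a'ᴴ) (by rw [← Matrix.star_eq_conjTranspose]; exact star_mem ha')
    have := congrArg Matrix.conjTranspose h2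
    rw [Matrix.conjTranspose_mul, Matrix.conjTranspose_mul,
      Matrix.conjTranspose_conjTranspose] at this
    exact this.symm
  have hcommh : ∀ i, h * a i = a i * h := by
    intro i
    have hxa : x * a i = a i * x := hx (a i) (haA i)
    have hxHa : xᴴ * a i = a i * xᴴ := hxHcomm (a i) (haA i)
    rcases hform with rfl | rfl
    · rw [Matrix.add_mul, Matrix.mul_add, hxa, hxHa]
    · rw [Matrix.smul_mul, Matrix.mul_smul, Matrix.sub_mul, Matrix.mul_sub, hxa, hxHa]
  have hH : h.IsHermitian := hherm
  set U : Mat 3 := (hH.eigenvectorUnitary : Mat 3) with hU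
  have hUU' : U * Uᴴ = 1 := by
    rw [← Matrix.star_eq_conjTranspose]
    exact (Matrix.mem_unitaryGroup_iff).mp (hH.eigenvectorUnitary).2
  have hUU : Uᴴ * U = 1 := mul_eq_one_comm.mp hUU'
  set dv : Fin 3 → ℝ := hH.eigenvalues with hdv
  have hsp : h = U * diagonal (fun k => (dv k : ℂ)) * Uᴴ := by
    have hst := hH.spectral_theorem
    rw [← Matrix.star_eq_conjTranspose]
    convert hst using 3
    rw [Unitary.conjStarAlgAut_apply]; rfl
  have hconjmul : ∀ p q : Mat 3, (Uᴴ*p*U) * (Uᴴ*q*U) = Uᴴ*(p*q)*U := by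
    intro p q
    calc (Uᴴ*p*U) * (Uᴴ*q*U) = Uᴴ*(p*((U*Uᴴ)*(q*U))) := by
          simp only [Matrix.mul_assoc]
      _ = Uᴴ*(p*(q*U)) := by rw [hUU', Matrix.one_mul]
      _ = Uᴴ*(p*q)*U := by simp only [Matrix.mul_assoc]
  have hnc : ¬ ∀ k, dv k = dv 0 := by
    intro hall
    apply hnsh ((dv 0 : ℝ) : ℂ)
    rw [hsp]
    have hdiag : (diagonal (fun k => (dv k : ℂ)) : Mat 3) = ((dv 0 : ℝ):ℂ) • 1 := by
      ext i j
      rw [Matrix.diagonal_apply]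
      by_cases hij : i = j
      · subst hij
        rw [if_pos rfl, hall i]
        simp [Matrix.one_apply]
      · rw [if_neg hij]
        simp [Matrix.one_apply, hij]
    rw [hdiag, Matrix.mul_smul, Matrix.smul_mul, Matrix.mul_one, hUU']
  obtain ⟨j₀, hj₀⟩ := exists_unique_class dv hnc
  set b : Fin 4 → Mat 3 := fun i => Uᴴ * a i * U with hb
  have hD : (diagonal (fun k => (dv k:ℂ)) : Mat 3) = Uᴴ * h * U := by
    rw [hsp]
    calc diagonal (fun k => (dv k:ℂ))
        = (Uᴴ * U) * diagonal (fun k => (dv k:ℂ)) * (Uᴴ * U) := by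
          rw [hUU, Matrix.one_mul, Matrix.mul_one]
      _ = Uᴴ * (U * diagonal (fun k => (dv k:ℂ)) * Uᴴ) * U := by
          simp only [Matrix.mul_assoc]
  have hcommD : ∀ i, b i * diagonal (fun k => (dv k:ℂ)) = diagonal (fun k => (dv k:ℂ)) * b i := by
    intro i
    rw [hD, hb]
    simp only []
    rw [hconjmul, hconjmul, (hcommh i).symm]
  have hcommE : ∀ i, b i * Matrix.single j₀ j₀ 1 = Matrix.single j₀ j₀ 1 * b i := by
    intro i
    have hcd := commute_diagonal_fun (fun k => (dv k:ℂ))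
      (fun z => if z = ((dv j₀:ℝ):ℂ) then 1 else 0) (b i) (hcommD i)
    rwa [diag_indicator_eq_std dv j₀ hj₀] at hcd
  have hbH : ∀ i, (b i)ᴴ = Uᴴ * (a i)ᴴ * U := by
    intro i
    rw [hb]
    simp only []
    rw [Matrix.conjTranspose_mul, Matrix.conjTranspose_mul,
      Matrix.conjTranspose_conjTranspose, Matrix.mul_assoc]
  have horthb : ∀ i j, ((b i)ᴴ * b j).trace = if i = j then 3 else 0 := by
    intro i j
    rw [hbH, hb]
    simp only []
    rw [hconjmul]
    rw [Matrix.trace_mul_cycle, ← Matrix.mul_assoc, hUU', Matrix.one_mul]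
    exact horth i j
  have hregb : (∑ i, b i * (b i)ᴴ) = (4:ℂ) • (1 : Mat 3) := by
    have : ∀ i, b i * (b i)ᴴ = Uᴴ * (a i * (a i)ᴴ) * U := by
      intro i
      rw [hbH, hb]
      simp only []
      rw [hconjmul]
    rw [Finset.sum_congr rfl (fun i _ => this i)]
    have : (∑ i, Uᴴ * (a i * (a i)ᴴ) * U) = Uᴴ * (∑ i, a i * (a i)ᴴ) * U := by
      rw [Matrix.mul_sum, Matrix.sum_mul]
    rw [this, hsum, Matrix.mul_smul, Matrix.smul_mul, Matrix.mul_one, hUU]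
  exact core b j₀ horthb hregb hcommE

end QG
end
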